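/- Let P = (C, w, ≁) be a polymer model with finite partition function Z and Gibbs distribution μ, let {Λ_i}_{i∈[m]} be a polymer clique cover of size m, and let P be the clique dynamics transition matrix on F. Then: (a) all entries of P are nonnegative, every row sums to 1, and P(Γ, Γ) > 0 for every Γ ∈ F; (b) detailed balance holds: μ(Γ)·P(Γ, Γ') = μ(Γ')·P(Γ', Γ) for all Γ, Γ' ∈ F; and (c) μ is a stationary distribution of P: ∑_{Γ∈F} μ(Γ)·P(Γ, Γ') = μ(Γ') for all Γ' ∈ F. -/

import Mathlib

open scoped ENNReal Classical

/-- An abstract polymer model: a set `C` of polymers with positive real weights and a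
reflexive, symmetric incompatibility relation. -/
structure PolymerModel (C : Type*) where
  w : C → ℝ
  w_pos : ∀ γ, 0 < w γ
  incomp : C → C → Prop
  incomp_refl : ∀ γ, incomp γ γ
  incomp_symm : ∀ γ γ', incomp γ γ' → incomp γ' γ

namespace PolymerModel

variable {C : Type*}

/-- A polymer family: a finite set of pairwise compatible polymers. -/
def IsFamily (P : PolymerModel C) (Γ : Finset C) : Prop :=
  ∀ γ ∈ Γ, ∀ γ' ∈ Γ, γ ≠ γ' → ¬P.incomp γ γ'

/-- A polymer clique: a set of pairwise incompatible polymers. -/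
def IsClique (P : PolymerModel C) (Λ : Set C) : Prop :=
  ∀ γ ∈ Λ, ∀ γ' ∈ Λ, P.incomp γ γ'

/-- The partition function restricted to `B`:
`Z_B = ∑_{Γ ∈ F_B} ∏_{γ ∈ Γ} w_γ` (valued in `ℝ≥0∞`). -/
noncomputable def Z (P : PolymerModel C) (B : Set C) : ℝ≥0∞ :=
  ∑' Γ : {Γ : Finset C // P.IsFamily Γ ∧ ↑Γ ⊆ B}, ∏ γ ∈ Γ.1, ENNReal.ofReal (P.w γ)

/-- The Gibbs distribution restricted to `B`, regarded as a distribution on all finite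
sets of polymers (assigning `0` outside `F_B`). -/
noncomputable def gibbs (P : PolymerModel C) (B : Set C) (Γ : Finset C) : ℝ≥0∞ :=
  if P.IsFamily Γ ∧ ↑Γ ⊆ B then (∏ γ ∈ Γ, ENNReal.ofReal (P.w γ)) / P.Z B else 0

/-- The clique dynamics condition for a function `f : C → ℝ_{>0}`:
for all `γ`, `∑_{γ' ≁ γ, γ' ≠ γ} f(γ') w_{γ'}/(1 + w_{γ'}) ≤ f(γ)`. -/
def CliqueDynamicsCondition (P : PolymerModel C) (f : C → ℝ) : Prop :=
  ∀ γ : C,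
    ∑' γ' : {γ' : C // P.incomp γ' γ ∧ γ' ≠ γ},
        ENNReal.ofReal (f γ' * P.w γ' / (1 + P.w γ')) ≤ ENNReal.ofReal (f γ)

/-- Total variation distance between two distributions on finite sets of polymers. -/
noncomputable def dTV (μ ν : Finset C → ℝ≥0∞) : ℝ≥0∞ :=
  (∑' Γ : Finset C, ((μ Γ - ν Γ) + (ν Γ - μ Γ))) / 2

end PolymerModel

namespace PolymerModel

variable {C : Type*}

/-- `z_γ = ∑_{i : γ ∈ Λ_i} 1/Z_{Λ_i}`. -/
noncomputable def zClique (P : PolymerModel C) {m : ℕ} (Λ : Fin m → Set C) (γ : C) : ℝ :=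
  ∑ i : Fin m, if γ ∈ Λ i then ((P.Z (Λ i)).toReal)⁻¹ else 0

/-- The off-diagonal entries of the clique dynamics transition matrix:
`P(Γ, Γ ∪ {γ}) = w_γ z_γ/m` for `γ ∉ Γ` with `Γ ∪ {γ} ∈ F`, and
`P(Γ, Γ ∖ {γ}) = z_γ/m` for `γ ∈ Γ`; all other off-diagonal entries vanish. -/
noncomputable def transOff (P : PolymerModel C) {m : ℕ} (Λ : Fin m → Set C)
    (Γ Γ' : Finset C) : ℝ :=
  (∑' γ : C,
      if γ ∉ Γ ∧ Γ' = insert γ Γ ∧ P.IsFamily (insert γ Γ) then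
        P.w γ * P.zClique Λ γ / m
      else 0)
    + ∑' γ : C, if γ ∈ Γ ∧ Γ' = Γ.erase γ then P.zClique Λ γ / m else 0

/-- The clique dynamics transition matrix on the polymer families: off-diagonal entries
given by `transOff`, diagonal entries `P(Γ, Γ) = 1 − ∑_{Γ' ∈ F, Γ' ≠ Γ} P(Γ, Γ')`. -/
noncomputable def trans (P : PolymerModel C) {m : ℕ} (Λ : Fin m → Set C)
    (Γ Γ' : Finset C) : ℝ :=
  if Γ' = Γ then
    1 - ∑' Γ'' : {Γ'' : Finset C // P.IsFamily Γ'' ∧ Γ'' ≠ Γ}, P.transOff Λ Γ ↑Γ''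
  else P.transOff Λ Γ Γ'

end PolymerModel

/-!
From a family `Γ` the clique dynamics can only move to `Γ ∆ {γ}`, at rate
`c_Γ(γ) z_γ / m`, where `c_Γ(γ)` (`toggleWeight`) is `1` if `γ ∈ Γ`, `w_γ` if `γ` can be
added to `Γ`, and `0` otherwise. Grouping by cliques, the total off-diagonal rate is
`(1/m) ∑_i Z_{Λ_i}⁻¹ ∑_{γ ∈ Λ_i} c_Γ(γ)`, and each inner sum is `< Z_{Λ_i}`, because
`Z_Λ ≥ 1 + ∑_{γ ∈ Λ} w_γ`: if `Γ` meets the clique `Λ_i` in `γ₀`, then `γ₀` is the only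
polymer of `Λ_i` that can be toggled, contributing `1 < 1 + w_{γ₀}`; otherwise every
`γ ∈ Λ_i` contributes at most `w_γ`. So the diagonal entries are positive and the rows
sum to `1`. Detailed balance reduces to `μ(Γ ∪ {γ}) = w_γ μ(Γ)`, and summing it over `Γ`
gives stationarity.
-/

open scoped symmDiff

namespace Finset

variable {α : Type*} [DecidableEq α] {s : Finset α} {a : α}

lemma symmDiff_singleton_of_mem (h : a ∈ s) : s ∆ {a} = s.erase a := by
  ext x
  by_cases hx : x = a <;> simp [mem_symmDiff, hx, h]

lemma symmDiff_singleton_of_notMem (h : a ∉ s) : s ∆ {a} = insert a s := by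
  ext x
  by_cases hx : x = a <;> simp [mem_symmDiff, hx, h]

lemma symmDiff_singleton_ne_self : s ∆ {a} ≠ s :=
  fun h => singleton_ne_empty a (symmDiff_eq_left.1 h)

lemma symmDiff_singleton_injective (s : Finset α) : Function.Injective fun a => s ∆ {a} :=
  (symmDiff_right_injective s).comp singleton_injective

end Finset

lemma summable_and_tsum_lt_of_tsum_ofReal_lt {α : Type*} {f : α → ℝ} (hf : ∀ a, 0 ≤ f a)
    {b : ℝ} (h : ∑' a, ENNReal.ofReal (f a) < ENNReal.ofReal b) :
    Summable f ∧ ∑' a, f a < b := by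
  have hsum : Summable f :=
    (ENNReal.summable_toReal h.ne_top).congr fun a => ENNReal.toReal_ofReal (hf a)
  refine ⟨hsum, ?_⟩
  rw [← ENNReal.ofReal_tsum_of_nonneg hf hsum] at h
  exact (ENNReal.ofReal_lt_ofReal_iff'.1 h).1

lemma tsum_mul_eq_of_detailed_balance {ι : Type*} {μ : ι → ℝ} {K : ι → ι → ℝ}
    (hbalance : ∀ x y, μ x * K x y = μ y * K y x) (hrow : ∀ x, ∑' y, K x y = 1) (y : ι) :
    ∑' x, μ x * K x y = μ y := by
  simp_rw [hbalance _ y, tsum_mul_left, hrow, mul_one]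

namespace PolymerModel

variable {C : Type*}

lemma IsFamily.subset {P : PolymerModel C} {Γ s : Finset C} (h : P.IsFamily Γ)
    (hs : s ⊆ Γ) : P.IsFamily s :=
  fun γ hγ γ' hγ' hne => h γ (hs hγ) γ' (hs hγ') hne

variable (P : PolymerModel C)

lemma isFamily_empty : P.IsFamily ∅ := by
  simp [IsFamily]

lemma isFamily_singleton (γ : C) : P.IsFamily {γ} := by
  simp +contextual [IsFamily]

section PartitionFunction

variable (B : Set C)

lemma one_add_tsum_le_Z : 1 + ∑' γ : B, ENNReal.ofReal (P.w γ) ≤ P.Z B := by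
  let empty : {Γ : Finset C // P.IsFamily Γ ∧ ↑Γ ⊆ B} := ⟨∅, P.isFamily_empty, by simp⟩
  let single (γ : B) : {Γ : Finset C // P.IsFamily Γ ∧ ↑Γ ⊆ B} :=
    ⟨{γ.1}, P.isFamily_singleton γ, by simp⟩
  have hsingle : Function.Injective single := fun a b h =>
    Subtype.ext (Finset.singleton_injective (congrArg Subtype.val h))
  rw [Z, ENNReal.tsum_eq_add_tsum_ite empty]
  gcongr
  · simp [empty]
  · refine le_of_eq_of_le (tsum_congr fun γ => ?_)
      (ENNReal.tsum_comp_le_tsum_of_injective hsingle _)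
    rw [if_neg fun h => Finset.singleton_ne_empty γ.1 (congrArg Subtype.val h)]
    simp [single]

lemma one_le_Z : 1 ≤ P.Z B :=
  le_trans le_self_add (P.one_add_tsum_le_Z B)

lemma ofReal_inv_toReal_Z : ENNReal.ofReal (P.Z B).toReal⁻¹ = (P.Z B)⁻¹ := by
  rw [← ENNReal.toReal_inv, ENNReal.ofReal_toReal]
  exact ENNReal.inv_ne_top.2 (zero_lt_one.trans_le (P.one_le_Z B)).ne'

end PartitionFunction

noncomputable def toggleWeight (Γ : Finset C) (γ : C) : ℝ :=
  if γ ∈ Γ then 1 else if P.IsFamily (insert γ Γ) then P.w γ else 0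

lemma toggleWeight_nonneg (Γ : Finset C) (γ : C) : 0 ≤ P.toggleWeight Γ γ := by
  unfold toggleWeight
  split_ifs <;> first | exact zero_le_one | exact (P.w_pos γ).le | exact le_rfl

lemma toggleWeight_le_w {Γ : Finset C} {γ : C} (hγ : γ ∉ Γ) :
    P.toggleWeight Γ γ ≤ P.w γ := by
  unfold toggleWeight
  split_ifs <;> first | exact le_rfl | exact (P.w_pos γ).le

lemma tsum_toggleWeight_lt_one_add {Λ : Set C} (hΛ : P.IsClique Λ) {Γ : Finset C}
    (hΓ : P.IsFamily Γ) (hfin : ∑' γ : Λ, ENNReal.ofReal (P.w γ) ≠ ⊤) :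
    ∑' γ : Λ, ENNReal.ofReal (P.toggleWeight Γ γ)
      < 1 + ∑' γ : Λ, ENNReal.ofReal (P.w γ) := by
  by_cases hmeet : ∃ γ₀ ∈ Γ, γ₀ ∈ Λ
  · obtain ⟨γ₀, hγ₀Γ, hγ₀Λ⟩ := hmeet
    have hzero : ∀ γ : Λ, γ ≠ ⟨γ₀, hγ₀Λ⟩ → ENNReal.ofReal (P.toggleWeight Γ γ) = 0 := by
      rintro ⟨γ, hγΛ⟩ hne
      have hne' : γ ≠ γ₀ := fun h => hne (Subtype.ext h)
      have hinc := hΛ γ hγΛ γ₀ hγ₀Λ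
      have hγΓ : γ ∉ Γ := fun hγΓ => hΓ γ hγΓ γ₀ hγ₀Γ hne' hinc
      have hfam : ¬P.IsFamily (insert γ Γ) := fun hf =>
        hf γ (Finset.mem_insert_self γ Γ) γ₀ (Finset.mem_insert_of_mem hγ₀Γ) hne' hinc
      simp [toggleWeight, hγΓ, hfam]
    rw [tsum_eq_single _ hzero]
    calc ENNReal.ofReal (P.toggleWeight Γ γ₀) = 1 := by simp [toggleWeight, hγ₀Γ]
      _ < 1 + ENNReal.ofReal (P.w γ₀) :=
        ENNReal.lt_add_right ENNReal.one_ne_top (by simpa using P.w_pos γ₀)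
      _ ≤ 1 + ∑' γ : Λ, ENNReal.ofReal (P.w γ) := by
        gcongr
        exact ENNReal.le_tsum (⟨γ₀, hγ₀Λ⟩ : Λ)
  · push Not at hmeet
    calc ∑' γ : Λ, ENNReal.ofReal (P.toggleWeight Γ γ)
        ≤ ∑' γ : Λ, ENNReal.ofReal (P.w γ) :=
          ENNReal.tsum_le_tsum fun γ =>
            ENNReal.ofReal_le_ofReal (P.toggleWeight_le_w fun h => hmeet γ h γ.2)
      _ < 1 + ∑' γ : Λ, ENNReal.ofReal (P.w γ) := by
        rw [add_comm]
        exact ENNReal.lt_add_right hfin one_ne_zero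

lemma inv_Z_mul_tsum_toggleWeight_lt_one {Λ : Set C} (hΛ : P.IsClique Λ) {Γ : Finset C}
    (hΓ : P.IsFamily Γ) :
    (P.Z Λ)⁻¹ * ∑' γ : Λ, ENNReal.ofReal (P.toggleWeight Γ γ) < 1 := by
  by_cases hZ : P.Z Λ = ⊤
  · simp [hZ]
  have hle := P.one_add_tsum_le_Z Λ
  have hfin : ∑' γ : Λ, ENNReal.ofReal (P.w γ) ≠ ⊤ :=
    ne_top_of_le_ne_top hZ (le_add_self.trans hle)
  refine ENNReal.mul_lt_of_lt_div' ?_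
  rw [one_div, inv_inv]
  exact (P.tsum_toggleWeight_lt_one_add hΛ hΓ hfin).trans_le hle

variable {m : ℕ} (Λ : Fin m → Set C)

noncomputable def toggleRate (Γ : Finset C) (γ : C) : ℝ :=
  P.toggleWeight Γ γ * P.zClique Λ γ / m

lemma zClique_nonneg (γ : C) : 0 ≤ P.zClique Λ γ :=
  Finset.sum_nonneg fun i _ => by split_ifs <;> positivity

lemma toggleRate_nonneg (Γ : Finset C) (γ : C) : 0 ≤ P.toggleRate Λ Γ γ :=
  div_nonneg (mul_nonneg (P.toggleWeight_nonneg Γ γ) (P.zClique_nonneg Λ γ)) m.cast_nonneg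

lemma transOff_symmDiff_singleton (Γ : Finset C) (γ₀ : C) :
    P.transOff Λ Γ (Γ ∆ {γ₀}) = P.toggleRate Λ Γ γ₀ := by
  have hinj : ∀ γ, Γ ∆ {γ₀} = Γ ∆ {γ} → γ = γ₀ := fun γ h =>
    (Finset.symmDiff_singleton_injective Γ h).symm
  rw [transOff, tsum_eq_single γ₀, tsum_eq_single γ₀]
  · by_cases h : γ₀ ∈ Γ
    · simp [h, toggleRate, toggleWeight, Finset.symmDiff_singleton_of_mem]
    · simp [h, toggleRate, toggleWeight, Finset.symmDiff_singleton_of_notMem]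
      split_ifs <;> simp
  · rintro γ hγ
    rw [if_neg]
    rintro ⟨hmem, he⟩
    exact hγ (hinj γ (he.trans (Finset.symmDiff_singleton_of_mem hmem).symm))
  · rintro γ hγ
    rw [if_neg]
    rintro ⟨hmem, he, -⟩
    exact hγ (hinj γ (he.trans (Finset.symmDiff_singleton_of_notMem hmem).symm))

lemma transOff_eq_zero_of_forall_ne {Γ Γ' : Finset C} (h : ∀ γ, Γ' ≠ Γ ∆ {γ}) :
    P.transOff Λ Γ Γ' = 0 := by
  rw [transOff]
  convert add_zero (0 : ℝ) using 2 <;> refine (tsum_congr fun γ => if_neg ?_).trans tsum_zero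
  · rintro ⟨hmem, he, -⟩
    exact h γ (he.trans (Finset.symmDiff_singleton_of_notMem hmem).symm)
  · rintro ⟨hmem, he⟩
    exact h γ (he.trans (Finset.symmDiff_singleton_of_mem hmem).symm)

lemma transOff_nonneg (Γ Γ' : Finset C) : 0 ≤ P.transOff Λ Γ Γ' := by
  by_cases h : ∃ γ, Γ' = Γ ∆ {γ}
  · obtain ⟨γ, rfl⟩ := h
    rw [transOff_symmDiff_singleton]
    exact P.toggleRate_nonneg Λ Γ γ
  · rw [P.transOff_eq_zero_of_forall_ne Λ (not_exists.1 h)]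

lemma isFamily_symmDiff_singleton {Γ : Finset C} (hΓ : P.IsFamily Γ) {γ : C}
    (h : P.toggleWeight Γ γ ≠ 0) : P.IsFamily (Γ ∆ {γ}) := by
  by_cases hγ : γ ∈ Γ
  · rw [Finset.symmDiff_singleton_of_mem hγ]
    exact hΓ.subset (Finset.erase_subset γ Γ)
  · rw [Finset.symmDiff_singleton_of_notMem hγ]
    by_contra hfam
    exact h (by simp [toggleWeight, hγ, hfam])

lemma support_transOff_subset_range (Γ : Finset C) :
    Function.support (P.transOff Λ Γ) ⊆ Set.range (Γ ∆ {·}) := fun Γ' h => by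
  by_contra hr
  exact h (P.transOff_eq_zero_of_forall_ne Λ fun γ he => hr ⟨γ, he.symm⟩)

lemma summable_transOff {Γ : Finset C} (h : Summable (P.toggleRate Λ Γ)) :
    Summable (P.transOff Λ Γ) :=
  ((Finset.symmDiff_singleton_injective Γ).summable_iff fun _ hx =>
    Function.notMem_support.1 fun h => hx (P.support_transOff_subset_range Λ Γ h)).1
    (h.congr fun γ => (P.transOff_symmDiff_singleton Λ Γ γ).symm)

lemma tsum_transOff_eq_tsum_toggleRate {Γ : Finset C} (hΓ : P.IsFamily Γ)
    {p : Finset C → Prop} (hp : ∀ Γ', P.IsFamily Γ' → Γ' ≠ Γ → p Γ') :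
    ∑' Γ' : {Γ' // p Γ'}, P.transOff Λ Γ Γ' = ∑' γ, P.toggleRate Λ Γ γ := by
  have hsupp : Function.support (P.transOff Λ Γ) ⊆ {Γ' | p Γ'} := by
    intro Γ' h
    obtain ⟨γ, rfl⟩ := P.support_transOff_subset_range Λ Γ h
    rw [Function.mem_support, transOff_symmDiff_singleton] at h
    refine hp _ (P.isFamily_symmDiff_singleton hΓ fun h0 => h ?_)
      Finset.symmDiff_singleton_ne_self
    simp [toggleRate, h0]
  refine (tsum_subtype_eq_of_support_subset hsupp).trans ?_
  rw [← (Finset.symmDiff_singleton_injective Γ).tsum_eq (P.support_transOff_subset_range Λ Γ)]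
  exact tsum_congr (P.transOff_symmDiff_singleton Λ Γ)

lemma ofReal_zClique (γ : C) :
    ENNReal.ofReal (P.zClique Λ γ) = ∑ i, (Λ i).indicator (fun _ => (P.Z (Λ i))⁻¹) γ := by
  rw [zClique, ENNReal.ofReal_sum_of_nonneg fun i _ => by split_ifs <;> positivity]
  refine Finset.sum_congr rfl fun i _ => ?_
  simp only [Set.indicator_apply]
  split_ifs <;> simp [ofReal_inv_toReal_Z]

lemma tsum_ofReal_toggleRate_lt_one (hm : 0 < m) (hclique : ∀ i, P.IsClique (Λ i))
    {Γ : Finset C} (hΓ : P.IsFamily Γ) : ∑' γ, ENNReal.ofReal (P.toggleRate Λ Γ γ) < 1 := by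
  have hrate : ∀ γ, ENNReal.ofReal (P.toggleRate Λ Γ γ) = (∑ i, (Λ i).indicator
      (fun γ => (P.Z (Λ i))⁻¹ * ENNReal.ofReal (P.toggleWeight Γ γ)) γ) / m := by
    intro γ
    rw [toggleRate, ENNReal.ofReal_div_of_pos (by exact_mod_cast hm),
      ENNReal.ofReal_mul (P.toggleWeight_nonneg Γ γ), ofReal_zClique, ENNReal.ofReal_natCast,
      Finset.mul_sum]
    congr 1
    refine Finset.sum_congr rfl fun i _ => ?_
    simp only [Set.indicator_apply]
    split_ifs <;> simp [mul_comm]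
  have hne : (Finset.univ : Finset (Fin m)).Nonempty := ⟨⟨0, hm⟩, Finset.mem_univ _⟩
  calc ∑' γ, ENNReal.ofReal (P.toggleRate Λ Γ γ)
      = (∑ i, (P.Z (Λ i))⁻¹ * ∑' γ : Λ i, ENNReal.ofReal (P.toggleWeight Γ γ)) / m := by
        simp_rw [hrate, div_eq_mul_inv, ENNReal.tsum_mul_right,
          Summable.tsum_finsetSum fun _ _ => ENNReal.summable, ← tsum_subtype,
          ENNReal.tsum_mul_left]
    _ < 1 := by
        refine ENNReal.div_lt_of_lt_mul ?_
        simpa using ENNReal.sum_lt_sum_of_nonempty hne fun i _ =>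
          P.inv_Z_mul_tsum_toggleWeight_lt_one (hclique i) hΓ

lemma summable_toggleRate_and_tsum_lt_one (hm : 0 < m) (hclique : ∀ i, P.IsClique (Λ i))
    {Γ : Finset C} (hΓ : P.IsFamily Γ) :
    Summable (P.toggleRate Λ Γ) ∧ ∑' γ, P.toggleRate Λ Γ γ < 1 :=
  summable_and_tsum_lt_of_tsum_ofReal_lt (P.toggleRate_nonneg Λ Γ)
    (by simpa using P.tsum_ofReal_toggleRate_lt_one Λ hm hclique hΓ)

lemma transOff_self (Γ : Finset C) : P.transOff Λ Γ Γ = 0 :=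
  P.transOff_eq_zero_of_forall_ne Λ fun _ h => Finset.symmDiff_singleton_ne_self h.symm

lemma trans_self {Γ : Finset C} (hΓ : P.IsFamily Γ) :
    P.trans Λ Γ Γ = 1 - ∑' γ, P.toggleRate Λ Γ γ := by
  rw [trans, if_pos rfl]
  congr 1
  exact P.tsum_transOff_eq_tsum_toggleRate Λ hΓ fun _ h h' => ⟨h, h'⟩

lemma trans_self_pos (hm : 0 < m) (hclique : ∀ i, P.IsClique (Λ i)) {Γ : Finset C}
    (hΓ : P.IsFamily Γ) : 0 < P.trans Λ Γ Γ := by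
  rw [P.trans_self Λ hΓ, sub_pos]
  exact (P.summable_toggleRate_and_tsum_lt_one Λ hm hclique hΓ).2

lemma trans_nonneg (hm : 0 < m) (hclique : ∀ i, P.IsClique (Λ i)) {Γ : Finset C}
    (hΓ : P.IsFamily Γ) (Γ' : Finset C) : 0 ≤ P.trans Λ Γ Γ' := by
  by_cases h : Γ' = Γ
  · subst h
    exact (P.trans_self_pos Λ hm hclique hΓ).le
  · rw [trans, if_neg h]
    exact P.transOff_nonneg Λ Γ Γ'

lemma tsum_trans_eq_one (hm : 0 < m) (hclique : ∀ i, P.IsClique (Λ i)) {Γ : Finset C}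
    (hΓ : P.IsFamily Γ) : ∑' Γ' : {Γ' : Finset C // P.IsFamily Γ'}, P.trans Λ Γ Γ' = 1 := by
  set R := ∑' γ, P.toggleRate Λ Γ γ
  have hsplit : ∀ Γ' : {Γ' : Finset C // P.IsFamily Γ'},
      P.trans Λ Γ Γ' = P.transOff Λ Γ Γ' + if Γ' = ⟨Γ, hΓ⟩ then 1 - R else 0 := by
    rintro ⟨Γ', hΓ'⟩
    by_cases h : Γ' = Γ
    · subst h
      simp [P.trans_self Λ hΓ, transOff_self, R]
    · simp [trans, h]
  have hsum : Summable fun Γ' : {Γ' : Finset C // P.IsFamily Γ'} => P.transOff Λ Γ Γ' :=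
    (P.summable_transOff Λ (P.summable_toggleRate_and_tsum_lt_one Λ hm hclique hΓ).1).subtype _
  rw [tsum_congr hsplit, Summable.tsum_add hsum (hasSum_ite_eq _ _).summable,
    tsum_ite_eq, P.tsum_transOff_eq_tsum_toggleRate Λ hΓ fun _ h _ => h, add_sub_cancel]

lemma gibbs_toReal_insert {Γ : Finset C} {γ : C} (hγ : γ ∉ Γ)
    (hfam : P.IsFamily (insert γ Γ)) :
    (P.gibbs Set.univ (insert γ Γ)).toReal = P.w γ * (P.gibbs Set.univ Γ).toReal := by
  have hΓ : P.IsFamily Γ := hfam.subset (Finset.subset_insert γ Γ)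
  rw [gibbs, gibbs, if_pos ⟨hfam, Set.subset_univ _⟩, if_pos ⟨hΓ, Set.subset_univ _⟩,
    Finset.prod_insert hγ, ENNReal.toReal_div, ENNReal.toReal_div, ENNReal.toReal_mul,
    ENNReal.toReal_ofReal (P.w_pos γ).le]
  ring

lemma gibbs_mul_transOff_symmDiff_of_notMem {Γ : Finset C} {γ : C} (hγ : γ ∉ Γ)
    (hfam : P.IsFamily (Γ ∆ {γ})) :
    (P.gibbs Set.univ Γ).toReal * P.transOff Λ Γ (Γ ∆ {γ})
      = (P.gibbs Set.univ (Γ ∆ {γ})).toReal * P.transOff Λ (Γ ∆ {γ}) Γ := by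
  have hback : P.transOff Λ (Γ ∆ {γ}) Γ = P.toggleRate Λ (Γ ∆ {γ}) γ := by
    simpa using P.transOff_symmDiff_singleton Λ (Γ ∆ {γ}) γ
  rw [hback, transOff_symmDiff_singleton]
  rw [Finset.symmDiff_singleton_of_notMem hγ] at hfam ⊢
  rw [P.gibbs_toReal_insert hγ hfam]
  simp [toggleRate, toggleWeight, hγ, hfam]
  ring

lemma gibbs_mul_transOff_comm {Γ Γ' : Finset C} (hΓ : P.IsFamily Γ) (hΓ' : P.IsFamily Γ') :
    (P.gibbs Set.univ Γ).toReal * P.transOff Λ Γ Γ'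
      = (P.gibbs Set.univ Γ').toReal * P.transOff Λ Γ' Γ := by
  by_cases h : ∃ γ, Γ' = Γ ∆ {γ}
  · obtain ⟨γ, rfl⟩ := h
    by_cases hγ : γ ∈ Γ
    · have hγ' : γ ∉ Γ ∆ {γ} := by simp [Finset.symmDiff_singleton_of_mem hγ]
      have h := P.gibbs_mul_transOff_symmDiff_of_notMem Λ hγ' (by simpa using hΓ)
      simp only [symmDiff_symmDiff_cancel_right] at h
      exact h.symm
    · exact P.gibbs_mul_transOff_symmDiff_of_notMem Λ hγ hΓ'
  · have h' : ∀ γ, Γ ≠ Γ' ∆ {γ} := fun γ he =>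
      h ⟨γ, by rw [he, symmDiff_symmDiff_cancel_right]⟩
    rw [P.transOff_eq_zero_of_forall_ne Λ (not_exists.1 h),
      P.transOff_eq_zero_of_forall_ne Λ h', mul_zero, mul_zero]

lemma gibbs_mul_trans_comm {Γ Γ' : Finset C} (hΓ : P.IsFamily Γ) (hΓ' : P.IsFamily Γ') :
    (P.gibbs Set.univ Γ).toReal * P.trans Λ Γ Γ'
      = (P.gibbs Set.univ Γ').toReal * P.trans Λ Γ' Γ := by
  by_cases h : Γ' = Γ
  · subst h
    rfl
  · rw [trans, if_neg h, trans, if_neg (Ne.symm h)]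
    exact P.gibbs_mul_transOff_comm Λ hΓ hΓ'

end PolymerModel

theorem clique_dynamics_stochastic_reversible_stationary_general {C : Type*} (P : PolymerModel C)
    {m : ℕ} (hm : 0 < m) (Λ : Fin m → Set C)
    (hclique : ∀ i, P.IsClique (Λ i)) :
    ((∀ Γ Γ' : Finset C, P.IsFamily Γ → P.IsFamily Γ' → 0 ≤ P.trans Λ Γ Γ') ∧
      (∀ Γ : Finset C, P.IsFamily Γ →
        ∑' Γ' : {Γ' : Finset C // P.IsFamily Γ'}, P.trans Λ Γ ↑Γ' = 1) ∧
      (∀ Γ : Finset C, P.IsFamily Γ → 0 < P.trans Λ Γ Γ)) ∧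
    (∀ Γ Γ' : Finset C, P.IsFamily Γ → P.IsFamily Γ' →
      (P.gibbs Set.univ Γ).toReal * P.trans Λ Γ Γ'
        = (P.gibbs Set.univ Γ').toReal * P.trans Λ Γ' Γ) ∧
    (∀ Γ' : Finset C, P.IsFamily Γ' →
      ∑' Γ : {Γ : Finset C // P.IsFamily Γ},
          (P.gibbs Set.univ ↑Γ).toReal * P.trans Λ ↑Γ Γ'
        = (P.gibbs Set.univ Γ').toReal) := by
  have hrow : ∀ Γ : Finset C, P.IsFamily Γ →
      ∑' Γ' : {Γ' : Finset C // P.IsFamily Γ'}, P.trans Λ Γ ↑Γ' = 1 :=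
    fun _ hΓ => P.tsum_trans_eq_one Λ hm hclique hΓ
  have hbalance : ∀ Γ Γ' : Finset C, P.IsFamily Γ → P.IsFamily Γ' →
      (P.gibbs Set.univ Γ).toReal * P.trans Λ Γ Γ'
        = (P.gibbs Set.univ Γ').toReal * P.trans Λ Γ' Γ :=
    fun _ _ hΓ hΓ' => P.gibbs_mul_trans_comm Λ hΓ hΓ'
  refine ⟨⟨fun _ Γ' hΓ _ => P.trans_nonneg Λ hm hclique hΓ Γ', hrow,
    fun _ hΓ => P.trans_self_pos Λ hm hclique hΓ⟩, hbalance, fun Γ' hΓ' => ?_⟩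
  exact tsum_mul_eq_of_detailed_balance
    (μ := fun Γ : {Γ : Finset C // P.IsFamily Γ} => (P.gibbs Set.univ Γ.1).toReal)
    (K := fun Γ Γ' => P.trans Λ Γ.1 Γ'.1) (fun Γ Γ' => hbalance Γ Γ' Γ.2 Γ'.2)
    (fun Γ => hrow Γ Γ.2) ⟨Γ', hΓ'⟩

/-- The clique dynamics transition matrix is a stochastic matrix with
positive self-loops on the polymer families, it satisfies detailed balance with respect
to the Gibbs distribution `μ`, and `μ` is a stationary distribution for it. -/
theorem clique_dynamics_stochastic_reversible_stationary {C : Type*} [Countable C]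
    [Nonempty C] (P : PolymerModel C) (hZfin : P.Z Set.univ ≠ ⊤)
    {m : ℕ} (hm : 0 < m) (Λ : Fin m → Set C)
    (hclique : ∀ i, P.IsClique (Λ i)) (hcover : (⋃ i, Λ i) = Set.univ) :
    ((∀ Γ Γ' : Finset C, P.IsFamily Γ → P.IsFamily Γ' → 0 ≤ P.trans Λ Γ Γ') ∧
      (∀ Γ : Finset C, P.IsFamily Γ →
        ∑' Γ' : {Γ' : Finset C // P.IsFamily Γ'}, P.trans Λ Γ ↑Γ' = 1) ∧
      (∀ Γ : Finset C, P.IsFamily Γ → 0 < P.trans Λ Γ Γ)) ∧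
    (∀ Γ Γ' : Finset C, P.IsFamily Γ → P.IsFamily Γ' →
      (P.gibbs Set.univ Γ).toReal * P.trans Λ Γ Γ'
        = (P.gibbs Set.univ Γ').toReal * P.trans Λ Γ' Γ) ∧
    (∀ Γ' : Finset C, P.IsFamily Γ' →
      ∑' Γ : {Γ : Finset C // P.IsFamily Γ},
          (P.gibbs Set.univ ↑Γ).toReal * P.trans Λ ↑Γ Γ'
        = (P.gibbs Set.univ Γ').toReal) :=
  clique_dynamics_stochastic_reversible_stationary_general P hm Λ hclique
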